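/- arXiv:2303.04210 — 2 statements merged into one kernel-verified Lean document; each statement's English description precedes it below -/
import Mathlib

section
/- Let f : [0,∞)×[0,∞) → (0,∞) be continuous and positive, nondecreasing in each variable separately, and suppose there exist p₁ ≥ 0, q₁ > 0 with p₁ + q₁ = (Q+2)/(Q−2) such that f(s,t)/(s^{p₁}t^{q₁}) is nonincreasing in each variable separately. Let u, v be positive continuous functions on ℍⁿ and λ > 0. Then there exists a constant C_λ > 0 such that for all ξ ∈ Σ_λ∖{0_λ}: |ξ|_ℍ^{−(Q+2)} f(|ξ|_ℍ^{Q−2}ū(ξ), |ξ|_ℍ^{Q−2}v̄(ξ)) − |ξ_λ|_ℍ^{−(Q+2)} f(|ξ_λ|_ℍ^{Q−2}ū_λ(ξ), |ξ_λ|_ℍ^{Q−2}v̄_λ(ξ)) ≤ (C_λ/|ξ|_ℍ⁴) · ((ū(ξ) − ū_λ(ξ))⁺ + (v̄(ξ) − v̄_λ(ξ))⁺). -/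
open MeasureTheory Real Filter Set Topology

noncomputable section

namespace Heisenberg

/-- The underlying space of the Heisenberg group `ℍⁿ`, identified with `ℝⁿ × ℝⁿ × ℝ`
(equipped with Lebesgue measure, which is the Haar measure of `ℍⁿ`). -/
abbrev H (n : ℕ) : Type := (Fin n → ℝ) × (Fin n → ℝ) × ℝ

variable {n : ℕ}

/-- `|x|² + |y|²` for `ξ = (x, y, t)`. -/
def rsq (ξ : H n) : ℝ := ∑ i, (ξ.1 i) ^ 2 + ∑ i, (ξ.2.1 i) ^ 2

/-- The Kaplan gauge `|ξ|_ℍ = ((|x|²+|y|²)² + t²)^{1/4}`. -/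
def gaugeH (ξ : H n) : ℝ := ((rsq ξ) ^ 2 + (ξ.2.2) ^ 2) ^ ((4 : ℝ)⁻¹)

/-- The left-invariant vector field `Xᵢ = ∂_{xᵢ} + 2yᵢ∂_t` applied to `φ`. -/
def Xd (i : Fin n) (φ : H n → ℝ) (ξ : H n) : ℝ :=
  fderiv ℝ φ ξ (Pi.single i 1, 0, 2 * ξ.2.1 i)

/-- The left-invariant vector field `Yᵢ = ∂_{yᵢ} − 2xᵢ∂_t` applied to `φ`. -/
def Yd (i : Fin n) (φ : H n → ℝ) (ξ : H n) : ℝ :=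
  fderiv ℝ φ ξ (0, Pi.single i 1, -(2 * ξ.1 i))

/-- The horizontal gradient `∇_ℍ φ = (X₁φ,…,Xₙφ,Y₁φ,…,Yₙφ)` of a differentiable function. -/
def hGrad (φ : H n → ℝ) (ξ : H n) : (Fin n → ℝ) × (Fin n → ℝ) :=
  (fun i => Xd i φ ξ, fun i => Yd i φ ξ)

/-- Euclidean pairing of two horizontal vectors. -/
def hdot (a b : (Fin n → ℝ) × (Fin n → ℝ)) : ℝ :=
  ∑ i, a.1 i * b.1 i + ∑ i, a.2 i * b.2 i

/-- The (pointwise, classical) sub-Laplacian `Δ_ℍ = ∑ᵢ (Xᵢ² + Yᵢ²)`. -/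
def subLap (u : H n → ℝ) (ξ : H n) : ℝ :=
  ∑ i, Xd i (Xd i u) ξ + ∑ i, Yd i (Yd i u) ξ

/-- `φ ∈ C¹_c(Ω)`. -/
structure IsTest (Ω : Set (H n)) (φ : H n → ℝ) : Prop where
  contDiff : ContDiff ℝ 1 φ
  compactSupport : HasCompactSupport φ
  supportSubset : tsupport φ ⊆ Ω

/-- `G` is a weak horizontal gradient of `u` on `Ω`, with `u` locally integrable on `Ω`
and `G` locally square-integrable on `Ω` (i.e. `u ∈ H¹_loc(Ω)` with horizontal gradient `G`). -/
structure IsWeakHGrad (Ω : Set (H n)) (u : H n → ℝ)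
    (G : H n → (Fin n → ℝ) × (Fin n → ℝ)) : Prop where
  locInt : LocallyIntegrableOn u Ω
  locSq : ∀ K : Set (H n), K ⊆ Ω → IsCompact K → IntegrableOn (fun ξ => ‖G ξ‖ ^ 2) K
  ibpX : ∀ i : Fin n, ∀ φ : H n → ℝ, IsTest Ω φ →
    ∫ ξ, u ξ * Xd i φ ξ = -∫ ξ, (G ξ).1 i * φ ξ
  ibpY : ∀ i : Fin n, ∀ φ : H n → ℝ, IsTest Ω φ →
    ∫ ξ, u ξ * Yd i φ ξ = -∫ ξ, (G ξ).2 i * φ ξ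

/-- `u ∈ H¹_loc(Ω)` is a weak solution of `−Δ_ℍ u = F` on `Ω`:
`∫ ∇_ℍu · ∇_ℍφ = ∫ F φ` for all `φ ∈ C¹_c(Ω)`. -/
def IsWeakSol (Ω : Set (H n)) (u F : H n → ℝ) : Prop :=
  ∃ G : H n → (Fin n → ℝ) × (Fin n → ℝ), IsWeakHGrad Ω u G ∧
    ∀ φ : H n → ℝ, IsTest Ω φ → ∫ ξ, hdot (G ξ) (hGrad φ ξ) = ∫ ξ, F ξ * φ ξ

/-- A function on `ℍⁿ` is cylindrical if it depends only on `r = √(|x|²+|y|²)` and `t`. -/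
def IsCylindrical (u : H n → ℝ) : Prop :=
  ∀ ξ ξ' : H n, rsq ξ = rsq ξ' → ξ.2.2 = ξ'.2.2 → u ξ = u ξ'

/-- The CR-inverted point `ξ̃`. -/
def tilde (ξ : H n) : H n :=
  (fun i => (ξ.1 i * ξ.2.2 + ξ.2.1 i * rsq ξ) / gaugeH ξ ^ 4,
   fun i => (ξ.2.1 i * ξ.2.2 - ξ.1 i * rsq ξ) / gaugeH ξ ^ 4,
   -ξ.2.2 / gaugeH ξ ^ 4)

/-- The CR inversion `ū(ξ) = |ξ|_ℍ^{−(Q−2)} u(ξ̃)`, where `Q − 2 = 2n`. -/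
def crInv (u : H n → ℝ) (ξ : H n) : ℝ := u (tilde ξ) / gaugeH ξ ^ (2 * n)

/-- The critical exponent `τ = (Q+2)/(Q−2)` with `Q = 2n+2`. -/
def tau (n : ℕ) : ℝ := (2 * (n : ℝ) + 4) / (2 * (n : ℝ))

/-- The half space `Σ_λ = {ξ = (x,y,t) : t > λ}`. -/
def Sig (l : ℝ) : Set (H n) := {ξ | l < ξ.2.2}

/-- The H-reflection `ξ_λ = (y, x, 2λ − t)` with respect to the plane `T_λ = {t = λ}`. -/
def hRefl (l : ℝ) (ξ : H n) : H n := (ξ.2.1, ξ.1, 2 * l - ξ.2.2)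

/-- The point `0_λ = (0, 0, 2λ)`. -/
def zl (l : ℝ) : H n := (0, 0, 2 * l)

/-- `U_λ = ū − ū_λ`, where `ū` is the CR inversion of `u` and `ū_λ(ξ) = ū(ξ_λ)`. -/
def Ulam (u : H n → ℝ) (l : ℝ) (ξ : H n) : ℝ := crInv u ξ - crInv u (hRefl l ξ)

/-- `w ∈ L^{τ+1}(Σ_λ) ∩ L^∞(Σ_λ)`. -/
def MemLtau1Linf (l : ℝ) (w : H n → ℝ) : Prop :=
  IntegrableOn (fun ξ => |w ξ| ^ (tau n + 1)) (Sig l) ∧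
    ∃ M : ℝ, ∀ ξ ∈ Sig (n := n) l, |w ξ| ≤ M

/-- `w ∈ H¹(Ω)`: square integrable on `Ω`, with a weak horizontal gradient which is
square integrable on `Ω`. -/
def MemH1 (Ω : Set (H n)) (w : H n → ℝ) : Prop :=
  IntegrableOn (fun ξ => (w ξ) ^ 2) Ω ∧
  ∃ G : H n → (Fin n → ℝ) × (Fin n → ℝ),
    IntegrableOn (fun ξ => ‖G ξ‖ ^ 2) Ω ∧
    (∀ i : Fin n, ∀ φ : H n → ℝ, IsTest Ω φ →
      ∫ ξ, w ξ * Xd i φ ξ = -∫ ξ, (G ξ).1 i * φ ξ) ∧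
    (∀ i : Fin n, ∀ φ : H n → ℝ, IsTest Ω φ →
      ∫ ξ, w ξ * Yd i φ ξ = -∫ ξ, (G ξ).2 i * φ ξ)

end Heisenberg

namespace Heisenberg

variable {n : ℕ}

lemma aux_pow_bound (q R : ℝ) (hq : 0 ≤ q) (hR : 1 ≤ R) :
    ∃ K : ℝ, 0 < K ∧ ∀ x : ℝ, 1 ≤ x → x ≤ R → x ^ q - 1 ≤ K * (x - 1) := by
  set N : ℕ := ⌈q⌉₊ + 1 with hN
  have hR0 : (0:ℝ) < R := lt_of_lt_of_le one_pos hR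
  refine ⟨(N : ℝ) * R ^ N, by positivity, fun x hx hxR => ?_⟩
  have hx0 : (0:ℝ) < x := lt_of_lt_of_le one_pos hx
  have h1 : x ^ q ≤ x ^ (N : ℕ) := by
    calc x ^ q ≤ x ^ ((N : ℕ) : ℝ) := by
          apply Real.rpow_le_rpow_of_exponent_le hx
          have := Nat.le_ceil q
          rw [hN]
          push_cast
          linarith
      _ = x ^ (N : ℕ) := Real.rpow_natCast x N
  have h2 : ∀ m : ℕ, x ^ m - 1 ≤ (m : ℝ) * R ^ m * (x - 1) := by
    intro m
    induction m with
    | zero => simp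
    | succ k ih =>
      have hxk : (1:ℝ) ≤ x ^ k := one_le_pow₀ hx
      have hRk : (1:ℝ) ≤ R ^ (k+1) := one_le_pow₀ hR
      have e1 : x * (x ^ k - 1) ≤ R * (x ^ k - 1) :=
        mul_le_mul_of_nonneg_right hxR (by linarith)
      have e2 : R * (x ^ k - 1) ≤ R * ((k : ℝ) * R ^ k * (x - 1)) :=
        mul_le_mul_of_nonneg_left ih (by linarith)
      have e3 : x ^ (k+1) - 1 = x * (x ^ k - 1) + (x - 1) := by ring
      have e4 : R * ((k : ℝ) * R ^ k * (x - 1)) = (k : ℝ) * R ^ (k+1) * (x - 1) := by ring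
      have e5 : 1 * (x - 1) ≤ R ^ (k+1) * (x - 1) :=
        mul_le_mul_of_nonneg_right hRk (by linarith)
      push_cast
      nlinarith
  linarith [h2 N]

lemma rsq_nonneg' (ξ : H n) : 0 ≤ rsq ξ := by
  unfold rsq; positivity

lemma gaugeH_pow_four' (ξ : H n) : gaugeH ξ ^ 4 = rsq ξ ^ 2 + ξ.2.2 ^ 2 := by
  have hA : (0:ℝ) ≤ rsq ξ ^ 2 + ξ.2.2 ^ 2 := by positivity
  unfold gaugeH
  rw [← Real.rpow_natCast ((rsq ξ ^ 2 + ξ.2.2 ^ 2) ^ ((4:ℝ)⁻¹)) 4, ← Real.rpow_mul hA]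
  norm_num

lemma gaugeH_nonneg' (ξ : H n) : 0 ≤ gaugeH ξ :=
  Real.rpow_nonneg (by positivity) _

lemma gaugeH_pos_of_t {ξ : H n} (h : ξ.2.2 ≠ 0) : 0 < gaugeH ξ := by
  apply Real.rpow_pos_of_pos
  have : 0 < ξ.2.2 ^ 2 := by positivity
  nlinarith [sq_nonneg (rsq ξ)]

lemma gaugeH_pos' {ξ : H n} (h : 0 < rsq ξ ^ 2 + ξ.2.2 ^ 2) : 0 < gaugeH ξ :=
  Real.rpow_pos_of_pos h _

lemma rsq_hRefl' (l : ℝ) (ξ : H n) : rsq (hRefl l ξ) = rsq ξ := by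
  simp [rsq, hRefl, add_comm]

lemma gaugeH_hRefl_pos {l : ℝ} {ξ : H n} (hne : ξ ≠ zl l) : 0 < gaugeH (hRefl l ξ) := by
  apply gaugeH_pos'
  rcases lt_or_eq_of_le (rsq_nonneg' (hRefl l ξ)) with h | h
  · nlinarith [sq_nonneg (hRefl l ξ).2.2]
  · have hr : rsq ξ = 0 := by rw [← rsq_hRefl' l ξ, ← h]
    rcases eq_or_ne ((hRefl l ξ).2.2) 0 with h2 | h2
    · exfalso
      apply hne
      have ht : ξ.2.2 = 2 * l := by
        have : 2 * l - ξ.2.2 = 0 := h2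
        linarith
      have hx : ξ.1 = 0 := by
        funext i
        have hsum : ∑ j, (ξ.1 j) ^ 2 = 0 := by
          have h1 : (0:ℝ) ≤ ∑ j, (ξ.1 j) ^ 2 := by positivity
          have h2' : (0:ℝ) ≤ ∑ j, (ξ.2.1 j) ^ 2 := by positivity
          unfold rsq at hr; linarith
        have h0 := (Finset.sum_eq_zero_iff_of_nonneg
          (fun j _ => sq_nonneg (ξ.1 j))).mp hsum i (Finset.mem_univ i)
        show ξ.1 i = 0
        exact pow_eq_zero_iff two_ne_zero |>.mp h0
      have hy : ξ.2.1 = 0 := by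
        funext i
        have hsum : ∑ j, (ξ.2.1 j) ^ 2 = 0 := by
          have h1 : (0:ℝ) ≤ ∑ j, (ξ.1 j) ^ 2 := by positivity
          have h2' : (0:ℝ) ≤ ∑ j, (ξ.2.1 j) ^ 2 := by positivity
          unfold rsq at hr; linarith
        have h0 := (Finset.sum_eq_zero_iff_of_nonneg
          (fun j _ => sq_nonneg (ξ.2.1 j))).mp hsum i (Finset.mem_univ i)
        show ξ.2.1 i = 0
        exact pow_eq_zero_iff two_ne_zero |>.mp h0
      show ξ = (0, 0, 2 * l)
      ext i
      · exact congrFun hx i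
      · exact congrFun hy i
      · exact ht
    · have : 0 < (hRefl l ξ).2.2 ^ 2 := by positivity
      nlinarith [sq_nonneg (rsq (hRefl l ξ))]

lemma pow_tau {n : ℕ} (hn : 1 ≤ n) {x : ℝ} (hx : 0 < x) {p₁ q₁ : ℝ}
    (hpq : p₁ + q₁ = tau n) :
    ((x ^ (2 * n) : ℝ)) ^ (p₁ + q₁) = x ^ (2 * n + 4) := by
  have hn0 : (n : ℝ) ≠ 0 := by
    exact_mod_cast Nat.one_le_iff_ne_zero.mp hn
  rw [hpq, tau, ← Real.rpow_natCast x (2 * n), ← Real.rpow_mul hx.le,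
    ← Real.rpow_natCast x (2 * n + 4)]
  congr 1
  push_cast
  field_simp

lemma key_scale {f : ℝ → ℝ → ℝ} {p₁ q₁ : ℝ}
    (hf_anti_t : ∀ s t t' : ℝ, 0 < s → 0 < t → t ≤ t' →
      f s t' / (s ^ p₁ * t' ^ q₁) ≤ f s t / (s ^ p₁ * t ^ q₁))
    (hf_anti_s : ∀ s s' t : ℝ, 0 < s → s ≤ s' → 0 < t →
      f s' t / (s' ^ p₁ * t ^ q₁) ≤ f s t / (s ^ p₁ * t ^ q₁))
    {a b c d : ℝ} (ha : 0 < a) (hb : 0 < b) (hac : a ≤ c) (hbd : b ≤ d) :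
    f c d / (c ^ p₁ * d ^ q₁) ≤ f a b / (a ^ p₁ * b ^ q₁) :=
  le_trans (hf_anti_s a c d ha hac (lt_of_lt_of_le hb hbd)) (hf_anti_t a b d ha hb hbd)

lemma rescale_eq {p₁ q₁ : ℝ} {g a b : ℝ} (hg : 0 < g) (ha : 0 < a) (hb : 0 < b)
    (F : ℝ) {m : ℕ} (hpow : ((g ^ (2 * m) : ℝ)) ^ (p₁ + q₁) = g ^ (2 * m + 4)) :
    F / g ^ (2 * m + 4)
      = F / ((g ^ (2 * m) * a) ^ p₁ * (g ^ (2 * m) * b) ^ q₁) * (a ^ p₁ * b ^ q₁) := by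
  have hG : (0:ℝ) < g ^ (2 * m) := pow_pos hg _
  rw [Real.mul_rpow hG.le ha.le, Real.mul_rpow hG.le hb.le, ← hpow, Real.rpow_add hG]
  have h1 : (0:ℝ) < a ^ p₁ := Real.rpow_pos_of_pos ha _
  have h2 : (0:ℝ) < b ^ q₁ := Real.rpow_pos_of_pos hb _
  have h3 : (0:ℝ) < (g ^ (2*m) : ℝ) ^ p₁ := Real.rpow_pos_of_pos hG _
  have h4 : (0:ℝ) < (g ^ (2*m) : ℝ) ^ q₁ := Real.rpow_pos_of_pos hG _
  field_simp

lemma reflect_bound {f : ℝ → ℝ → ℝ} {p₁ q₁ : ℝ}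
    (hf_anti_t : ∀ s t t' : ℝ, 0 < s → 0 < t → t ≤ t' →
      f s t' / (s ^ p₁ * t' ^ q₁) ≤ f s t / (s ^ p₁ * t ^ q₁))
    (hf_anti_s : ∀ s s' t : ℝ, 0 < s → s ≤ s' → 0 < t →
      f s' t / (s' ^ p₁ * t ^ q₁) ≤ f s t / (s ^ p₁ * t ^ q₁))
    {m : ℕ} {g g' a b : ℝ} (hg' : 0 < g') (hgg' : g' ≤ g) (ha : 0 < a) (hb : 0 < b)
    (hpow : ∀ x : ℝ, 0 < x → ((x ^ (2 * m) : ℝ)) ^ (p₁ + q₁) = x ^ (2 * m + 4)) :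
    f (g ^ (2 * m) * a) (g ^ (2 * m) * b) / g ^ (2 * m + 4)
      ≤ f (g' ^ (2 * m) * a) (g' ^ (2 * m) * b) / g' ^ (2 * m + 4) := by
  have hg : 0 < g := lt_of_lt_of_le hg' hgg'
  have hG' : (0:ℝ) < g' ^ (2 * m) := pow_pos hg' _
  have hGG : (g' : ℝ) ^ (2 * m) ≤ g ^ (2 * m) := pow_le_pow_left₀ hg'.le hgg' _
  have h1 := key_scale hf_anti_t hf_anti_s
    (mul_pos hG' ha) (mul_pos hG' hb)
    (mul_le_mul_of_nonneg_right hGG ha.le) (mul_le_mul_of_nonneg_right hGG hb.le)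
  have h2 := mul_le_mul_of_nonneg_right h1
    (le_of_lt (mul_pos (Real.rpow_pos_of_pos ha p₁) (Real.rpow_pos_of_pos hb q₁)))
  rwa [← rescale_eq hg ha hb _ (hpow g hg), ← rescale_eq hg' ha hb _ (hpow g' hg')] at h2

lemma term_bound {f : ℝ → ℝ → ℝ} {p₁ q₁ : ℝ}
    (hf_anti_s : ∀ s s' t : ℝ, 0 < s → s ≤ s' → 0 < t →
      f s' t / (s' ^ p₁ * t ^ q₁) ≤ f s t / (s ^ p₁ * t ^ q₁))
    {s₀ s₁ t F₀ K R : ℝ} (hs₀ : 0 < s₀) (hs : s₀ ≤ s₁) (ht : 0 < t)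
    (hf0 : 0 ≤ f s₀ t) (hfF : f s₀ t ≤ F₀) (hF₀ : 0 < F₀)
    (hK : 0 < K) (hratio : s₁ / s₀ ≤ R) (hR : 1 ≤ R)
    (hKb : ∀ x : ℝ, 1 ≤ x → x ≤ R → x ^ p₁ - 1 ≤ K * (x - 1)) :
    f s₁ t - f s₀ t ≤ F₀ * K * ((s₁ - s₀) / s₀) := by
  have hs₁ : 0 < s₁ := lt_of_lt_of_le hs₀ hs
  have hx1 : 1 ≤ s₁ / s₀ := (one_le_div hs₀).2 hs
  have htq : (0:ℝ) < t ^ q₁ := Real.rpow_pos_of_pos ht _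
  have hs₀p : (0:ℝ) < s₀ ^ p₁ := Real.rpow_pos_of_pos hs₀ _
  have hs₁p : (0:ℝ) < s₁ ^ p₁ := Real.rpow_pos_of_pos hs₁ _
  have h := hf_anti_s s₀ s₁ t hs₀ hs ht
  rw [div_le_div_iff₀ (by positivity) (by positivity)] at h
  -- h : f s₁ t * (s₀ ^ p₁ * t ^ q₁) ≤ f s₀ t * (s₁ ^ p₁ * t ^ q₁)
  have h1 : f s₁ t * s₀ ^ p₁ ≤ f s₀ t * s₁ ^ p₁ := by
    rw [← mul_assoc, ← mul_assoc] at h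
    exact le_of_mul_le_mul_right h htq
  have h1' : f s₁ t ≤ f s₀ t * ((s₁ / s₀) ^ p₁) := by
    rw [Real.div_rpow hs₁.le hs₀.le, ← mul_div_assoc, le_div_iff₀ hs₀p]
    exact h1
  have h2 := hKb (s₁ / s₀) hx1 hratio
  have h3 : f s₁ t - f s₀ t ≤ f s₀ t * ((s₁ / s₀) ^ p₁ - 1) := by linarith [h1']
  calc f s₁ t - f s₀ t ≤ f s₀ t * ((s₁ / s₀) ^ p₁ - 1) := h3
    _ ≤ f s₀ t * (K * (s₁ / s₀ - 1)) := mul_le_mul_of_nonneg_left h2 hf0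
    _ ≤ F₀ * (K * (s₁ / s₀ - 1)) := by
        apply mul_le_mul_of_nonneg_right hfF
        have : (0:ℝ) ≤ s₁ / s₀ - 1 := by linarith
        positivity
    _ = F₀ * K * ((s₁ - s₀) / s₀) := by field_simp

lemma rsq_le_gauge_sq {ξ : H n} : rsq ξ ≤ gaugeH ξ ^ 2 := by
  have hg4 := gaugeH_pow_four' ξ
  have h0 := rsq_nonneg' ξ
  have hgn := gaugeH_nonneg' ξ
  nlinarith [sq_nonneg (ξ.2.2), sq_nonneg (rsq ξ + gaugeH ξ ^ 2)]

lemma abs_t_le_gauge_sq {ξ : H n} : |ξ.2.2| ≤ gaugeH ξ ^ 2 := by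
  have hg4 := gaugeH_pow_four' ξ
  have hgn := gaugeH_nonneg' ξ
  have h2 : ξ.2.2 ^ 2 ≤ (gaugeH ξ ^ 2) ^ 2 := by nlinarith [sq_nonneg (rsq ξ)]
  have := abs_le_abs (a := ξ.2.2) (b := gaugeH ξ ^ 2)
  rw [abs_le]
  constructor <;> nlinarith [sq_nonneg (ξ.2.2 - gaugeH ξ ^ 2), sq_nonneg (ξ.2.2 + gaugeH ξ ^ 2)]

lemma coord_le_gauge {ξ : H n} (i : Fin n) :
    |ξ.1 i| ≤ gaugeH ξ ∧ |ξ.2.1 i| ≤ gaugeH ξ := by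
  have hgn := gaugeH_nonneg' ξ
  have hrg := rsq_le_gauge_sq (ξ := ξ)
  have h1 : ξ.1 i ^ 2 ≤ rsq ξ := by
    have hs : ξ.1 i ^ 2 ≤ ∑ j, ξ.1 j ^ 2 := Finset.single_le_sum (f := fun j => ξ.1 j ^ 2)
      (fun j _ => sq_nonneg _) (Finset.mem_univ i)
    have h2 : (0:ℝ) ≤ ∑ j, (ξ.2.1 j) ^ 2 := by positivity
    unfold rsq; linarith
  have h1' : ξ.2.1 i ^ 2 ≤ rsq ξ := by
    have hs : ξ.2.1 i ^ 2 ≤ ∑ j, ξ.2.1 j ^ 2 := Finset.single_le_sum (f := fun j => ξ.2.1 j ^ 2)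
      (fun j _ => sq_nonneg _) (Finset.mem_univ i)
    have h2 : (0:ℝ) ≤ ∑ j, (ξ.1 j) ^ 2 := by positivity
    unfold rsq; linarith
  constructor <;>
  · rw [abs_le]
    constructor <;> nlinarith [sq_nonneg (ξ.1 i - gaugeH ξ), sq_nonneg (ξ.1 i + gaugeH ξ),
      sq_nonneg (ξ.2.1 i - gaugeH ξ), sq_nonneg (ξ.2.1 i + gaugeH ξ)]

lemma tilde_norm_le {l : ℝ} (hl : 0 < l) {ξ : H n} (hξ : ξ ∈ Sig (n := n) l) :
    ‖tilde ξ‖ ≤ 2 / Real.sqrt l + l⁻¹ := by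
  have hlt : l < ξ.2.2 := hξ
  have hg : 0 < gaugeH ξ := gaugeH_pos_of_t (by intro h; rw [h] at hlt; linarith)
  set g := gaugeH ξ with hgdef
  have hg4 := gaugeH_pow_four' ξ
  have hrg : rsq ξ ≤ g ^ 2 := rsq_le_gauge_sq
  have htg : |ξ.2.2| ≤ g ^ 2 := abs_t_le_gauge_sq
  have hlg : l ≤ g ^ 2 := by
    have : ξ.2.2 ≤ |ξ.2.2| := le_abs_self _
    linarith
  have hsl : Real.sqrt l ≤ g := by
    have := Real.sqrt_le_sqrt hlg
    rwa [Real.sqrt_sq hg.le] at this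
  have hsl0 : 0 < Real.sqrt l := Real.sqrt_pos.mpr hl
  have hR0 : (0:ℝ) ≤ 2 / Real.sqrt l + l⁻¹ := by positivity
  have hgg : 2 / g ≤ 2 / Real.sqrt l := by
    apply div_le_div_of_nonneg_left (by norm_num) hsl0 hsl
  have hgg2 : 1 / g ^ 2 ≤ 1 / l := by
    apply div_le_div_of_nonneg_left (by norm_num) hl hlg
  have hg4pos : (0:ℝ) < g ^ 4 := by positivity
  have hcomp : ∀ a b : ℝ, |a| ≤ g → |b| ≤ g →
      |(a * ξ.2.2 + b * rsq ξ) / g ^ 4| ≤ 2 / Real.sqrt l := by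
    intro a b ha hb
    have hnum : |a * ξ.2.2 + b * rsq ξ| ≤ 2 * g ^ 3 := by
      calc |a * ξ.2.2 + b * rsq ξ| ≤ |a * ξ.2.2| + |b * rsq ξ| := abs_add_le _ _
        _ = |a| * |ξ.2.2| + |b| * |rsq ξ| := by rw [abs_mul, abs_mul]
        _ ≤ g * g ^ 2 + g * g ^ 2 := by
            apply add_le_add
            · exact mul_le_mul ha htg (abs_nonneg _) hg.le
            · rw [abs_of_nonneg (rsq_nonneg' ξ)]
              exact mul_le_mul hb hrg (rsq_nonneg' ξ) hg.le
        _ = 2 * g ^ 3 := by ring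
    calc |(a * ξ.2.2 + b * rsq ξ) / g ^ 4|
        = |a * ξ.2.2 + b * rsq ξ| / g ^ 4 := by
          rw [abs_div, abs_of_pos hg4pos]
      _ ≤ 2 * g ^ 3 / g ^ 4 := by gcongr
      _ = 2 / g := by field_simp
      _ ≤ 2 / Real.sqrt l := hgg
  rw [Prod.norm_def]
  apply max_le
  · rw [pi_norm_le_iff_of_nonneg hR0]
    intro i
    rw [Real.norm_eq_abs]
    have := hcomp (ξ.1 i) (ξ.2.1 i) (coord_le_gauge i).1 (coord_le_gauge i).2
    calc |(tilde ξ).1 i| ≤ 2 / Real.sqrt l := by simpa [tilde] using this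
      _ ≤ 2 / Real.sqrt l + l⁻¹ := le_add_of_nonneg_right (by positivity)
  · rw [Prod.norm_def]
    apply max_le
    · rw [pi_norm_le_iff_of_nonneg hR0]
      intro i
      rw [Real.norm_eq_abs]
      have h1 : |ξ.2.1 i * ξ.2.2 + (-(ξ.1 i)) * rsq ξ| ≤ 2 * g ^ 3 := by
        calc |ξ.2.1 i * ξ.2.2 + (-(ξ.1 i)) * rsq ξ|
            ≤ |ξ.2.1 i * ξ.2.2| + |(-(ξ.1 i)) * rsq ξ| := abs_add_le _ _
          _ = |ξ.2.1 i| * |ξ.2.2| + |ξ.1 i| * |rsq ξ| := by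
              rw [abs_mul, abs_mul, abs_neg]
          _ ≤ g * g ^ 2 + g * g ^ 2 := by
              apply add_le_add
              · exact mul_le_mul (coord_le_gauge i).2 htg (abs_nonneg _) hg.le
              · rw [abs_of_nonneg (rsq_nonneg' ξ)]
                exact mul_le_mul (coord_le_gauge i).1 hrg (rsq_nonneg' ξ) hg.le
          _ = 2 * g ^ 3 := by ring
      have h2 : |(ξ.2.1 i * ξ.2.2 - ξ.1 i * rsq ξ) / g ^ 4| ≤ 2 / Real.sqrt l := by
        calc |(ξ.2.1 i * ξ.2.2 - ξ.1 i * rsq ξ) / g ^ 4|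
            = |ξ.2.1 i * ξ.2.2 + (-(ξ.1 i)) * rsq ξ| / g ^ 4 := by
              rw [abs_div, abs_of_pos hg4pos]; ring_nf
          _ ≤ 2 * g ^ 3 / g ^ 4 := by gcongr
          _ = 2 / g := by field_simp
          _ ≤ 2 / Real.sqrt l := hgg
      calc |(tilde ξ).2.1 i| ≤ 2 / Real.sqrt l := by simpa [tilde] using h2
        _ ≤ 2 / Real.sqrt l + l⁻¹ := le_add_of_nonneg_right (by positivity)
    · rw [Real.norm_eq_abs]
      have h2 : |(-ξ.2.2) / g ^ 4| ≤ l⁻¹ := by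
        calc |(-ξ.2.2) / g ^ 4| = |ξ.2.2| / g ^ 4 := by rw [abs_div, abs_neg, abs_of_pos hg4pos]
          _ ≤ g ^ 2 / g ^ 4 := by gcongr
          _ = 1 / g ^ 2 := by field_simp
          _ ≤ 1 / l := hgg2
          _ = l⁻¹ := one_div l
      calc |(tilde ξ).2.2| ≤ l⁻¹ := by simpa [tilde] using h2
        _ ≤ 2 / Real.sqrt l + l⁻¹ := le_add_of_nonneg_left (by positivity)

lemma gauge_hRefl_le {l : ℝ} (hl : 0 < l) {ξ : H n} (hξ : ξ ∈ Sig (n := n) l) :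
    gaugeH (hRefl l ξ) ≤ gaugeH ξ := by
  have hlt : l < ξ.2.2 := hξ
  have h4 : gaugeH (hRefl l ξ) ^ 4 ≤ gaugeH ξ ^ 4 := by
    rw [gaugeH_pow_four', gaugeH_pow_four', rsq_hRefl']
    have hre : (hRefl l ξ).2.2 = 2 * l - ξ.2.2 := rfl
    rw [hre]
    nlinarith
  exact (pow_le_pow_iff_left₀ (gaugeH_nonneg' _) (gaugeH_nonneg' _) (by norm_num)).mp h4


set_option maxHeartbeats 1600000 in
/-- The pointwise comparison estimate for the two-variable nonlinearity: with `Q = 2n+2`,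
if `f : [0,∞)² → (0,∞)` is continuous, positive, nondecreasing in each variable, and
`f(s,t)/(s^{p₁}t^{q₁})` is nonincreasing in each variable for some `p₁ ≥ 0`, `q₁ > 0`
with `p₁+q₁ = (Q+2)/(Q−2)`, and `u, v` are positive continuous functions on `ℍⁿ` and
`λ > 0`, then there is `C_λ > 0` such that for all `ξ ∈ Σ_λ ∖ {0_λ}`:
`|ξ|_ℍ^{−(Q+2)} f(|ξ|_ℍ^{Q−2}ū, |ξ|_ℍ^{Q−2}v̄) −
 |ξ_λ|_ℍ^{−(Q+2)} f(|ξ_λ|_ℍ^{Q−2}ū_λ, |ξ_λ|_ℍ^{Q−2}v̄_λ) ≤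
 (C_λ/|ξ|_ℍ⁴)((ū − ū_λ)⁺ + (v̄ − v̄_λ)⁺)`. -/
theorem pointwise_comparison_general (n : ℕ) (hn : 1 ≤ n)
    (f : ℝ → ℝ → ℝ) (p₁ q₁ : ℝ)
    (hf_cont : ContinuousOn (fun p : ℝ × ℝ => f p.1 p.2) (Set.Ici 0 ×ˢ Set.Ici 0))
    (hf_pos : ∀ s t : ℝ, 0 ≤ s → 0 ≤ t → 0 < f s t)
    (hf_mono_t : ∀ s t t' : ℝ, 0 ≤ s → 0 ≤ t → t ≤ t' → f s t ≤ f s t')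
    (hf_mono_s : ∀ s s' t : ℝ, 0 ≤ s → s ≤ s' → 0 ≤ t → f s t ≤ f s' t)
    (hp₁ : 0 ≤ p₁) (hq₁ : 0 < q₁) (hpq₁ : p₁ + q₁ = tau n)
    (hf_anti_t : ∀ s t t' : ℝ, 0 < s → 0 < t → t ≤ t' →
      f s t' / (s ^ p₁ * t' ^ q₁) ≤ f s t / (s ^ p₁ * t ^ q₁))
    (hf_anti_s : ∀ s s' t : ℝ, 0 < s → s ≤ s' → 0 < t →
      f s' t / (s' ^ p₁ * t ^ q₁) ≤ f s t / (s ^ p₁ * t ^ q₁))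
    (u v : H n → ℝ)
    (hu_cont : Continuous u) (hv_cont : Continuous v)
    (hu_pos : ∀ ξ, 0 < u ξ) (hv_pos : ∀ ξ, 0 < v ξ)
    (l : ℝ) (hl : 0 < l) :
    ∃ C : ℝ, 0 < C ∧ ∀ ξ ∈ Sig (n := n) l, ξ ≠ zl l →
      f (gaugeH ξ ^ (2 * n) * crInv u ξ) (gaugeH ξ ^ (2 * n) * crInv v ξ) /
          gaugeH ξ ^ (2 * n + 4) -
        f (gaugeH (hRefl l ξ) ^ (2 * n) * crInv u (hRefl l ξ))
            (gaugeH (hRefl l ξ) ^ (2 * n) * crInv v (hRefl l ξ)) /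
          gaugeH (hRefl l ξ) ^ (2 * n + 4) ≤
      C / gaugeH ξ ^ 4 * (max (Ulam u l ξ) 0 + max (Ulam v l ξ) 0) := by
  classical
  set R : ℝ := 2 / Real.sqrt l + l⁻¹ with hRdef
  have hR0 : (0:ℝ) < R :=
    add_pos (div_pos two_pos (Real.sqrt_pos.mpr hl)) (inv_pos.mpr hl)
  have hKcpt : IsCompact (Metric.closedBall (0 : H n) R) := isCompact_closedBall _ _
  have hKne : (Metric.closedBall (0 : H n) R).Nonempty :=
    ⟨0, Metric.mem_closedBall_self hR0.le⟩
  obtain ⟨pu, hpuK, hpu⟩ := hKcpt.exists_isMinOn hKne hu_cont.continuousOn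
  obtain ⟨Pu, hPuK, hPu⟩ := hKcpt.exists_isMaxOn hKne hu_cont.continuousOn
  obtain ⟨pv, hpvK, hpv⟩ := hKcpt.exists_isMinOn hKne hv_cont.continuousOn
  obtain ⟨Pv, hPvK, hPv⟩ := hKcpt.exists_isMaxOn hKne hv_cont.continuousOn
  set mu := u pu with hmudef
  set Mu := u Pu with hMudef
  set mv := v pv with hmvdef
  set Mv := v Pv with hMvdef
  have hmu0 : 0 < mu := hu_pos pu
  have hMu0 : 0 < Mu := hu_pos Pu
  have hmv0 : 0 < mv := hv_pos pv
  have hMv0 : 0 < Mv := hv_pos Pv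
  have hmuMu : mu ≤ Mu := isMinOn_iff.mp hpu _ hPuK
  have hmvMv : mv ≤ Mv := isMinOn_iff.mp hpv _ hPvK
  set F₀ := f Mu Mv with hF₀def
  have hF₀ : 0 < F₀ := hf_pos _ _ hMu0.le hMv0.le
  have h1Ru : 1 ≤ 2 * Mu / mu := by
    rw [le_div_iff₀ hmu0]
    linarith only [hmuMu, hmu0]
  have h1Rv : 1 ≤ 2 * Mv / mv := by
    rw [le_div_iff₀ hmv0]
    linarith only [hmvMv, hmv0]
  obtain ⟨Kp, hKp0, hKp⟩ := aux_pow_bound p₁ (2 * Mu / mu) hp₁ h1Ru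
  obtain ⟨Kq, hKq0, hKq⟩ := aux_pow_bound q₁ (2 * Mv / mv) hq₁.le h1Rv
  have hc₁ : (0:ℝ) < 2*F₀/mu := div_pos (by linarith only [hF₀]) hmu0
  have hc₂ : (0:ℝ) < 2*F₀/mv := div_pos (by linarith only [hF₀]) hmv0
  have hc₃ : (0:ℝ) < 2*F₀*Kp/mu := div_pos (by nlinarith only [hF₀, hKp0]) hmu0
  have hc₄ : (0:ℝ) < 2*F₀*Kq/mv := div_pos (by nlinarith only [hF₀, hKq0]) hmv0
  refine ⟨2*F₀/mu + 2*F₀/mv + 2*F₀*Kp/mu + 2*F₀*Kq/mv, by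
    linarith only [hc₁, hc₂, hc₃, hc₄], ?_⟩
  set C : ℝ := 2*F₀/mu + 2*F₀/mv + 2*F₀*Kp/mu + 2*F₀*Kq/mv with hCdef
  have hC0 : 0 < C := by rw [hCdef]; linarith only [hc₁, hc₂, hc₃, hc₄]
  intro ξ hξ hξne
  simp only [Ulam]
  have hlt : l < ξ.2.2 := hξ
  have hg : 0 < gaugeH ξ := gaugeH_pos_of_t (by
    intro h
    rw [h] at hlt
    linarith only [hl, hlt])
  have hgl : 0 < gaugeH (hRefl l ξ) := gaugeH_hRefl_pos hξne
  have hglg : gaugeH (hRefl l ξ) ≤ gaugeH ξ := gauge_hRefl_le hl hξ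
  have hGn : (0:ℝ) < gaugeH ξ ^ (2*n) := pow_pos hg _
  have hGln : (0:ℝ) < gaugeH (hRefl l ξ) ^ (2*n) := pow_pos hgl _
  have hgp4 : (0:ℝ) < gaugeH ξ ^ 4 := pow_pos hg _
  have hgpn4 : (0:ℝ) < gaugeH ξ ^ (2*n+4) := pow_pos hg _
  have hgne : gaugeH ξ ≠ 0 := ne_of_gt hg
  have hmune : mu ≠ 0 := ne_of_gt hmu0
  have hmvne : mv ≠ 0 := ne_of_gt hmv0
  have hcr : ∀ (w : H n → ℝ) (η : H n), 0 < gaugeH η →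
      gaugeH η ^ (2*n) * crInv w η = w (tilde η) := by
    intro w η hη
    rw [crInv]
    field_simp
  have hau0 : 0 < crInv u ξ := div_pos (hu_pos _) (pow_pos hg _)
  have hav0 : 0 < crInv v ξ := div_pos (hv_pos _) (pow_pos hg _)
  have hbu0 : 0 < crInv u (hRefl l ξ) := div_pos (hu_pos _) (pow_pos hgl _)
  have hbv0 : 0 < crInv v (hRefl l ξ) := div_pos (hv_pos _) (pow_pos hgl _)
  set au := crInv u ξ with haudef
  set av := crInv v ξ with havdef
  set bu := crInv u (hRefl l ξ) with hbudef
  set bv := crInv v (hRefl l ξ) with hbvdef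
  have htmem : tilde ξ ∈ Metric.closedBall (0 : H n) R :=
    mem_closedBall_zero_iff.mpr (tilde_norm_le hl hξ)
  have hmu_le : mu ≤ u (tilde ξ) := isMinOn_iff.mp hpu _ htmem
  have hMu_ge : u (tilde ξ) ≤ Mu := isMaxOn_iff.mp hPu _ htmem
  have hmv_le : mv ≤ v (tilde ξ) := isMinOn_iff.mp hpv _ htmem
  have hMv_ge : v (tilde ξ) ≤ Mv := isMaxOn_iff.mp hPv _ htmem
  have hs₁e : gaugeH ξ ^ (2*n) * au = u (tilde ξ) := hcr u ξ hg
  have ht₁e : gaugeH ξ ^ (2*n) * av = v (tilde ξ) := hcr v ξ hg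
  have hs₁mu : mu ≤ gaugeH ξ ^ (2*n) * au := by rw [hs₁e]; exact hmu_le
  have hs₁Mu : gaugeH ξ ^ (2*n) * au ≤ Mu := by rw [hs₁e]; exact hMu_ge
  have ht₁mv : mv ≤ gaugeH ξ ^ (2*n) * av := by rw [ht₁e]; exact hmv_le
  have ht₁Mv : gaugeH ξ ^ (2*n) * av ≤ Mv := by rw [ht₁e]; exact hMv_ge
  set mxu := max (au - bu) 0 with hmxudef
  set mxv := max (av - bv) 0 with hmxvdef
  have hmxu0 : 0 ≤ mxu := le_max_right _ _
  have hmxv0 : 0 ≤ mxv := le_max_right _ _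
  have hB0 : (0:ℝ) ≤ f (gaugeH (hRefl l ξ) ^ (2*n) * bu) (gaugeH (hRefl l ξ) ^ (2*n) * bv) /
      gaugeH (hRefl l ξ) ^ (2*n+4) :=
    le_of_lt (div_pos (hf_pos _ _ (mul_pos hGln hbu0).le (mul_pos hGln hbv0).le)
      (pow_pos hgl _))
  by_cases hdeg : bu < au / 2 ∨ bv < av / 2
  · -- degenerate case
    have hA : f (gaugeH ξ ^ (2*n) * au) (gaugeH ξ ^ (2*n) * av) ≤ F₀ := by
      calc f (gaugeH ξ ^ (2*n) * au) (gaugeH ξ ^ (2*n) * av)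
          ≤ f Mu (gaugeH ξ ^ (2*n) * av) :=
            hf_mono_s _ _ _ (mul_pos hGn hau0).le hs₁Mu (mul_pos hGn hav0).le
        _ ≤ f Mu Mv := hf_mono_t _ _ _ hMu0.le (mul_pos hGn hav0).le ht₁Mv
    have hkey : F₀ / gaugeH ξ ^ (2*n+4) ≤ C / gaugeH ξ ^ 4 * (mxu + mxv) := by
      have hCg0 : (0:ℝ) ≤ C / gaugeH ξ ^ 4 := le_of_lt (div_pos hC0 hgp4)
      rcases hdeg with h | h
      · have h3 : mu / gaugeH ξ ^ (2*n) ≤ au := by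
          rw [div_le_iff₀ hGn, mul_comm]
          exact hs₁mu
        have h4 : au - bu ≤ mxu := le_max_left _ _
        have h2 : mu / (2 * gaugeH ξ ^ (2*n)) ≤ mxu := by
          have h5 : mu / (2 * gaugeH ξ ^ (2*n)) = (mu / gaugeH ξ ^ (2*n)) / 2 := by ring
          rw [h5]
          linarith only [h3, h4, h]
        have hX0 : (0:ℝ) ≤ mu / (2 * gaugeH ξ ^ (2*n)) :=
          le_of_lt (div_pos hmu0 (by linarith only [hGn]))
        calc F₀ / gaugeH ξ ^ (2*n+4)
            = (2*F₀/mu) / gaugeH ξ ^ 4 * (mu / (2 * gaugeH ξ ^ (2*n))) := by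
              rw [pow_add]
              field_simp
          _ ≤ C / gaugeH ξ ^ 4 * (mu / (2 * gaugeH ξ ^ (2*n))) := by
              apply mul_le_mul_of_nonneg_right _ hX0
              apply (div_le_div_iff_of_pos_right hgp4).mpr
              rw [hCdef]
              linarith only [hc₂, hc₃, hc₄]
          _ ≤ C / gaugeH ξ ^ 4 * (mxu + mxv) := by
              apply mul_le_mul_of_nonneg_left _ hCg0
              linarith only [h2, hmxv0]
      · have h3 : mv / gaugeH ξ ^ (2*n) ≤ av := by
          rw [div_le_iff₀ hGn, mul_comm]
          exact ht₁mv
        have h4 : av - bv ≤ mxv := le_max_left _ _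
        have h2 : mv / (2 * gaugeH ξ ^ (2*n)) ≤ mxv := by
          have h5 : mv / (2 * gaugeH ξ ^ (2*n)) = (mv / gaugeH ξ ^ (2*n)) / 2 := by ring
          rw [h5]
          linarith only [h3, h4, h]
        have hX0 : (0:ℝ) ≤ mv / (2 * gaugeH ξ ^ (2*n)) :=
          le_of_lt (div_pos hmv0 (by linarith only [hGn]))
        calc F₀ / gaugeH ξ ^ (2*n+4)
            = (2*F₀/mv) / gaugeH ξ ^ 4 * (mv / (2 * gaugeH ξ ^ (2*n))) := by
              rw [pow_add]
              field_simp
          _ ≤ C / gaugeH ξ ^ 4 * (mv / (2 * gaugeH ξ ^ (2*n))) := by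
              apply mul_le_mul_of_nonneg_right _ hX0
              apply (div_le_div_iff_of_pos_right hgp4).mpr
              rw [hCdef]
              linarith only [hc₁, hc₃, hc₄]
          _ ≤ C / gaugeH ξ ^ 4 * (mxu + mxv) := by
              apply mul_le_mul_of_nonneg_left _ hCg0
              linarith only [h2, hmxu0]
    calc f (gaugeH ξ ^ (2*n) * au) (gaugeH ξ ^ (2*n) * av) / gaugeH ξ ^ (2*n+4) -
          f (gaugeH (hRefl l ξ) ^ (2*n) * bu) (gaugeH (hRefl l ξ) ^ (2*n) * bv) /
            gaugeH (hRefl l ξ) ^ (2*n+4)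
        ≤ f (gaugeH ξ ^ (2*n) * au) (gaugeH ξ ^ (2*n) * av) / gaugeH ξ ^ (2*n+4) := by
          linarith only [hB0]
      _ ≤ F₀ / gaugeH ξ ^ (2*n+4) := (div_le_div_iff_of_pos_right hgpn4).mpr hA
      _ ≤ C / gaugeH ξ ^ 4 * (mxu + mxv) := hkey
  · -- nondegenerate case
    push_neg at hdeg
    obtain ⟨hbu2, hbv2⟩ := hdeg
    set s₁ := gaugeH ξ ^ (2*n) * au with hs₁def
    set t₁ := gaugeH ξ ^ (2*n) * av with ht₁def
    set s₂ := gaugeH ξ ^ (2*n) * bu with hs₂def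
    set t₂ := gaugeH ξ ^ (2*n) * bv with ht₂def
    set s₀ := min s₁ s₂ with hs₀def
    set t₀ := min t₁ t₂ with ht₀def
    have hs₂half : s₁ / 2 ≤ s₂ := by
      have h := mul_le_mul_of_nonneg_left hbu2 hGn.le
      calc s₁ / 2 = gaugeH ξ ^ (2*n) * (au / 2) := by rw [hs₁def]; ring
        _ ≤ gaugeH ξ ^ (2*n) * bu := h
    have ht₂half : t₁ / 2 ≤ t₂ := by
      have h := mul_le_mul_of_nonneg_left hbv2 hGn.le
      calc t₁ / 2 = gaugeH ξ ^ (2*n) * (av / 2) := by rw [ht₁def]; ring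
        _ ≤ gaugeH ξ ^ (2*n) * bv := h
    have hs₀lb : mu / 2 ≤ s₀ :=
      le_min (by linarith only [hs₁mu, hmu0]) (by linarith only [hs₂half, hs₁mu, hmu0])
    have ht₀lb : mv / 2 ≤ t₀ :=
      le_min (by linarith only [ht₁mv, hmv0]) (by linarith only [ht₂half, ht₁mv, hmv0])
    have hs₀pos : 0 < s₀ := lt_of_lt_of_le (by linarith only [hmu0]) hs₀lb
    have ht₀pos : 0 < t₀ := lt_of_lt_of_le (by linarith only [hmv0]) ht₀lb
    have hs₀le : s₀ ≤ s₁ := min_le_left _ _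
    have ht₀le : t₀ ≤ t₁ := min_le_left _ _
    have ht₁pos : 0 < t₁ := mul_pos hGn hav0
    have hs₁pos : 0 < s₁ := mul_pos hGn hau0
    have hfs₀t₁F : f s₀ t₁ ≤ F₀ :=
      le_trans (hf_mono_s s₀ Mu t₁ hs₀pos.le (le_trans hs₀le hs₁Mu) ht₁pos.le)
        (hf_mono_t Mu t₁ Mv hMu0.le ht₁pos.le ht₁Mv)
    have hfs₀t₀F : f s₀ t₀ ≤ F₀ :=
      le_trans (hf_mono_s s₀ Mu t₀ hs₀pos.le (le_trans hs₀le hs₁Mu) ht₀pos.le)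
        (hf_mono_t Mu t₀ Mv hMu0.le ht₀pos.le (le_trans ht₀le ht₁Mv))
    have hratio_s : s₁ / s₀ ≤ 2 * Mu / mu := by
      have h1 : s₁ / s₀ ≤ Mu / (mu/2) :=
        div_le_div₀ hMu0.le hs₁Mu (by linarith only [hmu0]) hs₀lb
      have h2 : Mu / (mu/2) = 2 * Mu / mu := by
        field_simp
      exact h2 ▸ h1
    have hratio_t : t₁ / t₀ ≤ 2 * Mv / mv := by
      have h1 : t₁ / t₀ ≤ Mv / (mv/2) :=
        div_le_div₀ hMv0.le ht₁Mv (by linarith only [hmv0]) ht₀lb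
      have h2 : Mv / (mv/2) = 2 * Mv / mv := by
        field_simp
      exact h2 ▸ h1
    have T1 : f s₁ t₁ - f s₀ t₁ ≤ F₀ * Kp * ((s₁ - s₀) / s₀) :=
      term_bound hf_anti_s hs₀pos hs₀le ht₁pos
        (hf_pos _ _ hs₀pos.le ht₁pos.le).le hfs₀t₁F hF₀ hKp0 hratio_s h1Ru hKp
    have hf_anti_t' : ∀ s s' t : ℝ, 0 < s → s ≤ s' → 0 < t →
        (fun a b => f b a) s' t / (s' ^ q₁ * t ^ p₁) ≤
          (fun a b => f b a) s t / (s ^ q₁ * t ^ p₁) := by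
      intro s s' t hs hss ht
      show f t s' / (s' ^ q₁ * t ^ p₁) ≤ f t s / (s ^ q₁ * t ^ p₁)
      rw [mul_comm (s' ^ q₁) (t ^ p₁), mul_comm (s ^ q₁) (t ^ p₁)]
      exact hf_anti_t t s s' ht hs hss
    have T2 : f s₀ t₁ - f s₀ t₀ ≤ F₀ * Kq * ((t₁ - t₀) / t₀) :=
      term_bound (f := fun a b => f b a) (p₁ := q₁) (q₁ := p₁) hf_anti_t'
        ht₀pos ht₀le hs₀pos (hf_pos _ _ hs₀pos.le ht₀pos.le).le hfs₀t₀F hF₀ hKq0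
        hratio_t h1Rv hKq
    have hmono : f s₀ t₀ ≤ f s₂ t₂ :=
      le_trans (hf_mono_s s₀ s₂ t₀ hs₀pos.le (min_le_right _ _) ht₀pos.le)
        (hf_mono_t s₂ t₀ t₂ (mul_pos hGn hbu0).le ht₀pos.le (min_le_right _ _))
    have hd1 : (s₁ - s₀) / s₀ ≤ 2 / mu * (s₁ - s₀) := by
      have h1 : (s₁ - s₀) / s₀ ≤ (s₁ - s₀) / (mu/2) :=
        div_le_div_of_nonneg_left (by linarith only [hs₀le]) (by linarith only [hmu0]) hs₀lb
      have h2 : (s₁ - s₀) / (mu/2) = 2 / mu * (s₁ - s₀) := by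
        field_simp
      exact h2 ▸ h1
    have hd2 : (t₁ - t₀) / t₀ ≤ 2 / mv * (t₁ - t₀) := by
      have h1 : (t₁ - t₀) / t₀ ≤ (t₁ - t₀) / (mv/2) :=
        div_le_div_of_nonneg_left (by linarith only [ht₀le]) (by linarith only [hmv0]) ht₀lb
      have h2 : (t₁ - t₀) / (mv/2) = 2 / mv * (t₁ - t₀) := by
        field_simp
      exact h2 ▸ h1
    have hsub_u : s₁ - s₀ = gaugeH ξ ^ (2*n) * mxu := by
      rw [hs₀def, hs₁def, hs₂def, hmxudef]
      rcases le_total au bu with h | h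
      · rw [min_eq_left (mul_le_mul_of_nonneg_left h hGn.le),
          max_eq_right (by linarith only [h])]
        ring
      · rw [min_eq_right (mul_le_mul_of_nonneg_left h hGn.le),
          max_eq_left (by linarith only [h])]
        ring
    have hsub_v : t₁ - t₀ = gaugeH ξ ^ (2*n) * mxv := by
      rw [ht₀def, ht₁def, ht₂def, hmxvdef]
      rcases le_total av bv with h | h
      · rw [min_eq_left (mul_le_mul_of_nonneg_left h hGn.le),
          max_eq_right (by linarith only [h])]
        ring
      · rw [min_eq_right (mul_le_mul_of_nonneg_left h hGn.le),
          max_eq_left (by linarith only [h])]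
        ring
    have hstep1 : f s₂ t₂ / gaugeH ξ ^ (2*n+4) ≤
        f (gaugeH (hRefl l ξ) ^ (2*n) * bu) (gaugeH (hRefl l ξ) ^ (2*n) * bv) /
          gaugeH (hRefl l ξ) ^ (2*n+4) :=
      reflect_bound hf_anti_t hf_anti_s hgl hglg hbu0 hbv0
        (fun x hx => pow_tau hn hx hpq₁)
    have e2 : F₀ * Kp * ((s₁ - s₀) / s₀) ≤ F₀ * Kp * (2 / mu * (s₁ - s₀)) :=
      mul_le_mul_of_nonneg_left hd1 (by nlinarith only [hF₀, hKp0])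
    have e3 : F₀ * Kq * ((t₁ - t₀) / t₀) ≤ F₀ * Kq * (2 / mv * (t₁ - t₀)) :=
      mul_le_mul_of_nonneg_left hd2 (by nlinarith only [hF₀, hKq0])
    have hnum : f s₁ t₁ - f s₂ t₂ ≤
        F₀ * Kp * (2 / mu) * (gaugeH ξ ^ (2*n) * mxu) +
          F₀ * Kq * (2 / mv) * (gaugeH ξ ^ (2*n) * mxv) := by
      calc f s₁ t₁ - f s₂ t₂ ≤ (f s₁ t₁ - f s₀ t₁) + (f s₀ t₁ - f s₀ t₀) := by
            linarith only [hmono]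
        _ ≤ F₀ * Kp * ((s₁ - s₀) / s₀) + F₀ * Kq * ((t₁ - t₀) / t₀) := by
            linarith only [T1, T2]
        _ ≤ F₀ * Kp * (2 / mu * (s₁ - s₀)) + F₀ * Kq * (2 / mv * (t₁ - t₀)) := by
            linarith only [e2, e3]
        _ = F₀ * Kp * (2 / mu) * (gaugeH ξ ^ (2*n) * mxu) +
              F₀ * Kq * (2 / mv) * (gaugeH ξ ^ (2*n) * mxv) := by
            rw [hsub_u, hsub_v]
            ring
    have hc1 : F₀ * Kp * (2 / mu) ≤ C := by
      rw [hCdef]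
      have h4 : F₀ * Kp * (2 / mu) = 2*F₀*Kp/mu := by ring
      rw [h4]
      linarith only [hc₁, hc₂, hc₄]
    have hc2 : F₀ * Kq * (2 / mv) ≤ C := by
      rw [hCdef]
      have h4 : F₀ * Kq * (2 / mv) = 2*F₀*Kq/mv := by ring
      rw [h4]
      linarith only [hc₁, hc₂, hc₃]
    calc f s₁ t₁ / gaugeH ξ ^ (2*n+4) -
          f (gaugeH (hRefl l ξ) ^ (2*n) * bu) (gaugeH (hRefl l ξ) ^ (2*n) * bv) /
            gaugeH (hRefl l ξ) ^ (2*n+4)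
        ≤ f s₁ t₁ / gaugeH ξ ^ (2*n+4) - f s₂ t₂ / gaugeH ξ ^ (2*n+4) := by
          linarith only [hstep1]
      _ = (f s₁ t₁ - f s₂ t₂) / gaugeH ξ ^ (2*n+4) := by rw [sub_div]
      _ ≤ (F₀ * Kp * (2 / mu) * (gaugeH ξ ^ (2*n) * mxu) +
            F₀ * Kq * (2 / mv) * (gaugeH ξ ^ (2*n) * mxv)) / gaugeH ξ ^ (2*n+4) :=
          (div_le_div_iff_of_pos_right hgpn4).mpr hnum
      _ = (F₀ * Kp * (2 / mu) * mxu + F₀ * Kq * (2 / mv) * mxv) / gaugeH ξ ^ 4 := by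
          rw [pow_add]
          field_simp
      _ ≤ C / gaugeH ξ ^ 4 * (mxu + mxv) := by
          rw [div_mul_eq_mul_div]
          have hnum2 : F₀ * Kp * (2 / mu) * mxu + F₀ * Kq * (2 / mv) * mxv ≤
              C * (mxu + mxv) := by
            have w1 := mul_le_mul_of_nonneg_right hc1 hmxu0
            have w2 := mul_le_mul_of_nonneg_right hc2 hmxv0
            linarith only [w1, w2]
          exact (div_le_div_iff_of_pos_right hgp4).mpr hnum2

end Heisenberg
end
end

section
/- Let u : ℍⁿ → ℝ be a cylindrical function of class C², and for λ ∈ ℝ define the H-reflected function u_λ(ξ) = u(ξ_λ), where ξ_λ = (y,x,2λ−t) for ξ = (x,y,t). Then the sub-Laplacian is invariant under H-reflection: for every ξ ∈ ℍⁿ, (Δ_ℍ u_λ)(ξ) = (Δ_ℍ u)(ξ_λ). -/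
open MeasureTheory Real Filter Set Topology

noncomputable section

namespace Heisenberg

/-- The derivative of the H-reflection: `(a, b, s) ↦ (b, a, −s)`. -/
def reflL (n : ℕ) : H n →L[ℝ] H n :=
  ((ContinuousLinearMap.fst ℝ (Fin n → ℝ) ℝ).comp
      (ContinuousLinearMap.snd ℝ (Fin n → ℝ) ((Fin n → ℝ) × ℝ))).prod
    ((ContinuousLinearMap.fst ℝ (Fin n → ℝ) ((Fin n → ℝ) × ℝ)).prod
      (-(ContinuousLinearMap.snd ℝ (Fin n → ℝ) ℝ).comp
        (ContinuousLinearMap.snd ℝ (Fin n → ℝ) ((Fin n → ℝ) × ℝ))))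

@[simp] lemma reflL_apply {n : ℕ} (v : H n) : reflL n v = (v.2.1, v.1, -v.2.2) := rfl

lemma hasFDerivAt_hRefl {n : ℕ} (l : ℝ) (ξ : H n) :
    HasFDerivAt (hRefl l) (reflL n) ξ := by
  have h : HasFDerivAt (fun η : H n => (((0 : Fin n → ℝ), (0 : Fin n → ℝ), 2 * l) : H n)
      + reflL n η) (reflL n) ξ := (reflL n).hasFDerivAt.const_add _
  convert h using 1
  funext η
  simp [hRefl, Prod.ext_iff]
  ring

lemma fderiv_comp_hRefl {n : ℕ} (l : ℝ) (ξ : H n) (g : H n → ℝ)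
    (hg : DifferentiableAt ℝ g (hRefl l ξ)) :
    fderiv ℝ (fun η => g (hRefl l η)) ξ = (fderiv ℝ g (hRefl l ξ)).comp (reflL n) := by
  exact (hg.hasFDerivAt.comp ξ (hasFDerivAt_hRefl l ξ)).fderiv

lemma Xd_comp_hRefl {n : ℕ} (l : ℝ) (ξ : H n) (i : Fin n) (g : H n → ℝ)
    (hg : DifferentiableAt ℝ g (hRefl l ξ)) :
    Xd i (fun η => g (hRefl l η)) ξ = Yd i g (hRefl l ξ) := by
  simp only [Xd, Yd, fderiv_comp_hRefl l ξ g hg, ContinuousLinearMap.comp_apply, reflL_apply]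
  rfl

lemma Yd_comp_hRefl {n : ℕ} (l : ℝ) (ξ : H n) (i : Fin n) (g : H n → ℝ)
    (hg : DifferentiableAt ℝ g (hRefl l ξ)) :
    Yd i (fun η => g (hRefl l η)) ξ = Xd i g (hRefl l ξ) := by
  simp only [Xd, Yd, fderiv_comp_hRefl l ξ g hg, ContinuousLinearMap.comp_apply, reflL_apply]
  norm_num
  rfl

lemma differentiable_Xd {n : ℕ} (u : H n → ℝ) (hu : ContDiff ℝ 2 u) (i : Fin n) :
    Differentiable ℝ (Xd i u) := by
  have h1 : Differentiable ℝ (fderiv ℝ u) :=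
    (hu.fderiv_right (m := 1) (by norm_num)).differentiable one_ne_zero
  intro η
  exact (h1 η).clm_apply (by fun_prop)

lemma differentiable_Yd {n : ℕ} (u : H n → ℝ) (hu : ContDiff ℝ 2 u) (i : Fin n) :
    Differentiable ℝ (Yd i u) := by
  have h1 : Differentiable ℝ (fderiv ℝ u) :=
    (hu.fderiv_right (m := 1) (by norm_num)).differentiable one_ne_zero
  intro η
  exact (h1 η).clm_apply (by fun_prop)

/-- The sub-Laplacian is invariant under the H-reflection
`ξ_λ = (y, x, 2λ − t)` on cylindrical `C²` functions:
`(Δ_ℍ u_λ)(ξ) = (Δ_ℍ u)(ξ_λ)` where `u_λ(ξ) = u(ξ_λ)`. -/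
theorem subLap_hRefl_invariant (n : ℕ) (u : H n → ℝ)
    (hu_cyl : IsCylindrical u) (hu_smooth : ContDiff ℝ 2 u) (l : ℝ) (ξ : H n) :
    subLap (fun η => u (hRefl l η)) ξ = subLap u (hRefl l ξ) := by
  have hud : Differentiable ℝ u := hu_smooth.differentiable (by norm_num)
  have hX : ∀ i : Fin n, Xd i (fun η => u (hRefl l η)) = fun η => Yd i u (hRefl l η) := by
    intro i; funext η; exact Xd_comp_hRefl l η i u (hud _)
  have hY : ∀ i : Fin n, Yd i (fun η => u (hRefl l η)) = fun η => Xd i u (hRefl l η) := by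
    intro i; funext η; exact Yd_comp_hRefl l η i u (hud _)
  unfold subLap
  rw [add_comm (∑ i, Xd i (Xd i u) (hRefl l ξ))]
  congr 1
  · apply Finset.sum_congr rfl
    intro i _
    rw [hX i]
    exact Xd_comp_hRefl l ξ i (Yd i u) (differentiable_Yd u hu_smooth i _)
  · apply Finset.sum_congr rfl
    intro i _
    rw [hY i]
    exact Yd_comp_hRefl l ξ i (Xd i u) (differentiable_Xd u hu_smooth i _)

end Heisenberg
end
end
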